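/- Let π be a pmf on a finite product set 𝒳 × 𝒴 with π(x,y) > 0 for all (x,y), and let π_X, π_Y denote its marginals. Then 𝓗(π_X, π_Y ‖ π) − H(π) ≥ D(π_X ⊗ π_Y ‖ π) + D(π ‖ π_X ⊗ π_Y), where π_X ⊗ π_Y denotes the product pmf (x,y) ↦ π_X(x)π_Y(y). -/

import Mathlib

open scoped BigOperators

/-- `log(1/t)` with values in the extended reals: `+∞` when `t = 0`. -/
noncomputable def negLogE (t : ℝ) : EReal :=
  if t = 0 then (⊤ : EReal) else ((Real.log t⁻¹ : ℝ) : EReal)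

/-- `Q` is a coupling of the pmfs `PX` and `PY`. -/
def IsCoupling {X Y : Type*} [Fintype X] [Fintype Y]
    (PX : X → ℝ) (PY : Y → ℝ) (Q : X × Y → ℝ) : Prop :=
  (∀ p, 0 ≤ Q p) ∧ (∀ x, ∑ y, Q (x, y) = PX x) ∧ (∀ y, ∑ x, Q (x, y) = PY y)

/-- The maximal cross-entropy `𝓗(PX, PY ‖ π)`, with values in the extended reals. -/
noncomputable def maxCrossEnt {X Y : Type*} [Fintype X] [Fintype Y]
    (PX : X → ℝ) (PY : Y → ℝ) (π : X × Y → ℝ) : EReal :=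
  sSup {s : EReal | ∃ Q, IsCoupling PX PY Q ∧
    s = ∑ p : X × Y, (Q p : EReal) * negLogE (π p)}

/-- Shannon entropy `H(P) = ∑ P(x) log(1/P(x))` (with `0 · log (1/0) = 0`). -/
noncomputable def entropy {X : Type*} [Fintype X] (P : X → ℝ) : ℝ :=
  ∑ x, P x * Real.log (P x)⁻¹

/-- Relative entropy `D(P‖Q) = ∑_{x : P(x) > 0} P(x) log(P(x)/Q(x))`. -/
noncomputable def relEnt {X : Type*} [Fintype X] (P Q : X → ℝ) : ℝ :=
  ∑ x, if P x = 0 then 0 else P x * Real.log (P x / Q x)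

/-
The product of the marginals `m = π_X ⊗ π_Y` is itself a coupling of `π_X` and `π_Y`, so
`𝓗(π_X, π_Y ‖ π) ≥ ∑ m log (1/π)`. Expanding the three entropies,
`H(π) + D(m ‖ π) + D(π ‖ m) = ∑ m log (1/π) + ∑ (m - π) log m`, and the last sum vanishes:
`log m(x, y) = log π_X(x) + log π_Y(y)` is additively separable, so its expectation under a
coupling depends only on the marginals, which `m` and `π` share.
-/

open Finset

theorem EReal.coe_finset_sum {α : Type*} (s : Finset α) (f : α → ℝ) :
    ((∑ i ∈ s, f i : ℝ) : EReal) = ∑ i ∈ s, (f i : EReal) :=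
  map_sum (⟨⟨Real.toEReal, EReal.coe_zero⟩, EReal.coe_add⟩ : ℝ →+ EReal) f s

theorem entropy_add_relEnt_add_relEnt {α : Type*} [Fintype α] {P Q : α → ℝ}
    (hP : ∀ a, 0 < P a) (hQ : ∀ a, 0 < Q a) :
    entropy P + relEnt Q P + relEnt P Q
      = ∑ a, Q a * Real.log (P a)⁻¹
        + (∑ a, Q a * Real.log (Q a) - ∑ a, P a * Real.log (Q a)) := by
  simp only [entropy, relEnt, if_neg (hP _).ne', if_neg (hQ _).ne', ← sum_sub_distrib,
    ← sum_add_distrib]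
  refine sum_congr rfl fun a _ => ?_
  rw [Real.log_div (hQ a).ne' (hP a).ne', Real.log_div (hP a).ne' (hQ a).ne', Real.log_inv]
  ring

section Coupling

variable {X Y : Type*} [Fintype X] [Fintype Y]

theorem isCoupling_marginals {π : X × Y → ℝ} (hπ : ∀ p, 0 ≤ π p) :
    IsCoupling (fun x => ∑ y, π (x, y)) (fun y => ∑ x, π (x, y)) π :=
  ⟨hπ, fun _ => rfl, fun _ => rfl⟩

theorem isCoupling_prod {PX : X → ℝ} {PY : Y → ℝ} (hPX : ∀ x, 0 ≤ PX x) (hPY : ∀ y, 0 ≤ PY y)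
    (hPX1 : ∑ x, PX x = 1) (hPY1 : ∑ y, PY y = 1) :
    IsCoupling PX PY (fun p => PX p.1 * PY p.2) :=
  ⟨fun p => mul_nonneg (hPX _) (hPY _),
    fun x => by simp only [← mul_sum, hPY1, mul_one],
    fun y => by simp only [← sum_mul, hPX1, one_mul]⟩

theorem IsCoupling.sum_mul_add {PX : X → ℝ} {PY : Y → ℝ} {Q : X × Y → ℝ}
    (hQ : IsCoupling PX PY Q) (f : X → ℝ) (g : Y → ℝ) :
    ∑ p, Q p * (f p.1 + g p.2) = ∑ x, PX x * f x + ∑ y, PY y * g y := by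
  simp only [mul_add, sum_add_distrib, Fintype.sum_prod_type]
  rw [sum_comm (f := fun x y => Q (x, y) * g y)]
  simp only [← sum_mul, hQ.2.1, hQ.2.2]

theorem IsCoupling.sum_mul_log_prod {PX : X → ℝ} {PY : Y → ℝ} {Q : X × Y → ℝ}
    (hQ : IsCoupling PX PY Q) (hPX : ∀ x, PX x ≠ 0) (hPY : ∀ y, PY y ≠ 0) :
    ∑ p, Q p * Real.log (PX p.1 * PY p.2)
      = ∑ x, PX x * Real.log (PX x) + ∑ y, PY y * Real.log (PY y) := by
  simp only [Real.log_mul (hPX _) (hPY _)]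
  exact hQ.sum_mul_add (fun x => Real.log (PX x)) (fun y => Real.log (PY y))

theorem IsCoupling.le_maxCrossEnt {PX : X → ℝ} {PY : Y → ℝ} {Q π : X × Y → ℝ}
    (hQ : IsCoupling PX PY Q) (hπ : ∀ p, π p ≠ 0) :
    ((∑ p, Q p * Real.log (π p)⁻¹ : ℝ) : EReal) ≤ maxCrossEnt PX PY π := by
  refine le_sSup ⟨Q, hQ, ?_⟩
  rw [EReal.coe_finset_sum]
  refine sum_congr rfl fun p _ => ?_
  rw [negLogE, if_neg (hπ p), EReal.coe_mul]

end Coupling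

/-- for a full-support pmf `π` on a finite product,
`𝓗(π_X, π_Y ‖ π) − H(π) ≥ D(π_X ⊗ π_Y ‖ π) + D(π ‖ π_X ⊗ π_Y)`. -/
theorem stmt_1 {X Y : Type*} [Fintype X] [Fintype Y]
    (π : X × Y → ℝ) (hπpos : ∀ p, 0 < π p) (hπ1 : ∑ p, π p = 1) :
    ((entropy π
        + relEnt (fun p : X × Y => (∑ y, π (p.1, y)) * (∑ x, π (x, p.2))) π
        + relEnt π (fun p : X × Y => (∑ y, π (p.1, y)) * (∑ x, π (x, p.2))) : ℝ) : EReal)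
      ≤ maxCrossEnt (fun x => ∑ y, π (x, y)) (fun y => ∑ x, π (x, y)) π := by
  obtain ⟨⟨x₀, y₀⟩, -⟩ := nonempty_of_sum_ne_zero (hπ1.trans_ne one_ne_zero)
  set PX : X → ℝ := fun x => ∑ y, π (x, y)
  set PY : Y → ℝ := fun y => ∑ x, π (x, y)
  have hPX : ∀ x, 0 < PX x := fun x => sum_pos (fun y _ => hπpos _) ⟨y₀, mem_univ _⟩
  have hPY : ∀ y, 0 < PY y := fun y => sum_pos (fun x _ => hπpos _) ⟨x₀, mem_univ _⟩
  have hπc : IsCoupling PX PY π := isCoupling_marginals fun p => (hπpos p).le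
  have hmc : IsCoupling PX PY (fun p => PX p.1 * PY p.2) :=
    isCoupling_prod (fun x => (hPX x).le) (fun y => (hPY y).le)
      (by rw [← hπ1, Fintype.sum_prod_type]) (by rw [← hπ1, Fintype.sum_prod_type_right])
  rw [entropy_add_relEnt_add_relEnt hπpos fun p => mul_pos (hPX p.1) (hPY p.2),
    hmc.sum_mul_log_prod (hPX · |>.ne') (hPY · |>.ne'),
    hπc.sum_mul_log_prod (hPX · |>.ne') (hPY · |>.ne'), sub_self, add_zero]
  exact hmc.le_maxCrossEnt fun p => (hπpos p).ne'
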